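/- Let E = A(B₂ⁿ) be an ellipsoid in ℝⁿ centered at the origin, where A is an invertible linear map and B₂ⁿ is the closed unit Euclidean ball. Then for every x ∈ ℝⁿ, ∫_{S^{n-1}} |⟨x, θ⟩| · ρ_E(θ)^{n+1} dθ = 2 (κ_{n−1}/κₙ) · vol(E) · h_E(x), where the integration is with respect to the spherical Lebesgue measure. Equivalently, ∫_{S^{n-1}} |⟨x, θ⟩| ‖θ‖_E^{−n−1} dθ = 2 κ_{n−1} |det A| · |Aᵀx|. -/

import Mathlib

open MeasureTheory Real Set
open scoped RealInnerProductSpace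

noncomputable def sphereMeasure (n : ℕ) :
    Measure (Metric.sphere (0 : EuclideanSpace ℝ (Fin n)) 1) :=
  (volume : Measure (EuclideanSpace ℝ (Fin n))).toSphere

noncomputable def radial {n : ℕ} (K : Set (EuclideanSpace ℝ (Fin n)))
    (x : EuclideanSpace ℝ (Fin n)) : ℝ :=
  sSup {t : ℝ | 0 ≤ t ∧ t • x ∈ K}

/-- The support function `h_K(x) = max_{y ∈ K} ⟨x, y⟩`. -/
noncomputable def suppFn {n : ℕ} (K : Set (EuclideanSpace ℝ (Fin n)))
    (x : EuclideanSpace ℝ (Fin n)) : ℝ :=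
  sSup ((fun y => ⟪x, y⟫) '' K)

/-- `κₘ = π^{m/2} / Γ(m/2 + 1)`, the volume of the unit Euclidean ball in `ℝᵐ`. -/
noncomputable def kappa (m : ℕ) : ℝ :=
  Real.pi ^ ((m : ℝ) / 2) / Real.Gamma ((m : ℝ) / 2 + 1)

open scoped ENNReal
open Module Metric

/-!
Both sides come from computing `∫_{ℝⁿ} |⟨x, y⟩| e^{-‖A⁻¹y‖²} dy` in two ways. In polar coordinates
`y = rθ` the radial integral is `Γ((n+1)/2)/2 · ‖A⁻¹θ‖^{-(n+1)}`, and `‖A⁻¹θ‖⁻¹ = ρ_E(θ)`, so this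
gives the left-hand side up to the factor `Γ((n+1)/2)/2`. Substituting `y = Az` instead gives
`|det A| ∫ |⟨Aᵀx, z⟩| e^{-‖z‖²} dz`, and after rotating `Aᵀx` onto a coordinate axis the Gaussian
integral factors as `|Aᵀx| π^{(n-1)/2}`. It remains to use `vol(E) = |det A| κₙ` and
`h_E(x) = |Aᵀx|`.
-/

theorem sSup_inner_image_closedBall {E : Type*} [NormedAddCommGroup E] [InnerProductSpace ℝ E]
    (v : E) :
    sSup ((fun z => ⟪v, z⟫) '' closedBall 0 1) = ‖v‖ := by
  refine IsGreatest.csSup_eq ⟨⟨‖v‖⁻¹ • v, ?_, ?_⟩, ?_⟩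
  · rw [mem_closedBall_zero_iff, norm_smul, norm_inv, norm_norm]
    exact inv_mul_le_one_of_le₀ le_rfl (norm_nonneg v)
  · rcases eq_or_ne v 0 with rfl | hv
    · simp
    · simp only [real_inner_smul_right, real_inner_self_eq_norm_sq]
      field_simp
  · rintro _ ⟨z, hz, rfl⟩
    simpa using real_inner_le_norm v z |>.trans
      (mul_le_of_le_one_right (norm_nonneg v) (mem_closedBall_zero_iff.1 hz))

variable {n : ℕ}

theorem radial_image_closedBall (A : EuclideanSpace ℝ (Fin n) ≃ₗ[ℝ] EuclideanSpace ℝ (Fin n))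
    {θ : EuclideanSpace ℝ (Fin n)} (hθ : θ ≠ 0) :
    radial (A '' closedBall 0 1) θ = ‖A.symm θ‖⁻¹ := by
  have hc : 0 < ‖A.symm θ‖ := norm_pos_iff.2 (A.symm.map_ne_zero_iff.2 hθ)
  have hset : {t : ℝ | 0 ≤ t ∧ t • θ ∈ A '' closedBall 0 1} = Icc 0 ‖A.symm θ‖⁻¹ := by
    ext t
    simp only [mem_ofPred_eq, mem_Icc, A.image_eq_preimage_symm,
      mem_preimage, map_smul, mem_closedBall_zero_iff, norm_smul, and_congr_right_iff]
    intro ht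
    rw [Real.norm_of_nonneg ht, ← le_div_iff₀ hc, one_div]
  rw [radial, hset, csSup_Icc (by positivity)]

theorem suppFn_image_closedBall (A : EuclideanSpace ℝ (Fin n) ≃ₗ[ℝ] EuclideanSpace ℝ (Fin n))
    (x : EuclideanSpace ℝ (Fin n)) :
    suppFn (A '' closedBall 0 1) x = ‖LinearMap.adjoint A.toLinearMap x‖ := by
  rw [suppFn, image_image, ← sSup_inner_image_closedBall]
  simp_rw [LinearMap.adjoint_inner_left, LinearEquiv.coe_coe]

theorem kappa_eq (m : ℕ) : kappa m = √π ^ m / Gamma (m / 2 + 1) := by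
  rw [kappa, sqrt_eq_rpow, ← rpow_natCast, ← rpow_mul pi_pos.le, one_div_mul_eq_div]

theorem kappa_pos (m : ℕ) : 0 < kappa m := by
  rw [kappa_eq]
  have := Gamma_pos_of_pos (by positivity : (0 : ℝ) < m / 2 + 1)
  positivity

theorem kappa_sub_one (hn : 0 < n) :
    kappa (n - 1) = √π ^ (n - 1) / Gamma ((n + 1) / 2) := by
  rw [kappa_eq, Nat.cast_pred hn]
  ring_nf

theorem volume_image_closedBall [NeZero n]
    (A : EuclideanSpace ℝ (Fin n) ≃ₗ[ℝ] EuclideanSpace ℝ (Fin n)) :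
    volume (A '' closedBall 0 1) = ENNReal.ofReal (|LinearMap.det A.toLinearMap| * kappa n) := by
  rw [← LinearEquiv.coe_coe, Measure.addHaar_image_linearMap, EuclideanSpace.volume_closedBall,
    kappa_eq, ENNReal.ofReal_mul (abs_nonneg _)]
  simp

section Polar

variable {E : Type*} [NormedAddCommGroup E] [NormedSpace ℝ E] [FiniteDimensional ℝ E]
  [MeasurableSpace E] [BorelSpace E] [Nontrivial E] (μ : Measure E) [μ.IsAddHaarMeasure]

theorem lintegral_eq_lintegral_toSphere_lintegral_Ioi {f : E → ℝ≥0∞} (hf : Measurable f) :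
    ∫⁻ y, f y ∂μ = ∫⁻ θ : sphere (0 : E) 1, (∫⁻ r in Ioi (0 : ℝ),
      ENNReal.ofReal (r ^ (finrank ℝ E - 1)) * f (r • (θ : E))) ∂μ.toSphere := by
  have hpolar := (Measure.measurePreserving_homeomorphUnitSphereProd μ).lintegral_comp_emb
    (Homeomorph.measurableEmbedding _) fun p => f ((p.2 : ℝ) • (p.1 : E))
  simp only [homeomorphUnitSphereProd_apply_snd_coe, homeomorphUnitSphereProd_apply_fst_coe,
    smul_inv_smul₀ (norm_ne_zero_iff.2 (mem_compl_singleton_iff.1 (Subtype.prop _)))] at hpolar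
  conv_lhs => rw [← restrict_compl_singleton (μ := μ) 0,
    ← lintegral_subtype_comap (measurableSet_singleton _).compl, hpolar,
    lintegral_prod _ (by fun_prop)]
  refine lintegral_congr fun θ => ?_
  rw [Measure.volumeIoiPow, lintegral_withDensity_eq_lintegral_mul _ (by fun_prop) (by fun_prop),
    ← lintegral_subtype_comap measurableSet_Ioi]
  rfl

end Polar

theorem integral_Ioi_pow_mul_exp_neg_mul_sq (k : ℕ) {c : ℝ} (hc : 0 < c) :
    ∫ r in Ioi (0 : ℝ), r ^ k * exp (-(c * r) ^ 2) = Gamma ((k + 1) / 2) / (2 * c ^ (k + 1)) := by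
  have h := integral_rpow_mul_exp_neg_mul_rpow two_pos
    (by linarith [k.cast_nonneg (α := ℝ)] : (-1 : ℝ) < k) (pow_pos hc 2)
  have hpow : (c ^ 2) ^ (-((k : ℝ) + 1) / 2) = (c ^ (k + 1))⁻¹ := by
    rw [← rpow_natCast, ← rpow_mul hc.le, ← rpow_natCast, ← rpow_neg hc.le]
    push_cast
    ring_nf
  simp only [rpow_natCast, rpow_two, hpow, neg_mul, ← mul_pow] at h
  rw [h]
  ring

theorem integrableOn_Ioi_pow_mul_exp_neg_mul_sq (k : ℕ) {c : ℝ} (hc : 0 < c) :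
    IntegrableOn (fun r : ℝ => r ^ k * exp (-(c * r) ^ 2)) (Ioi 0) := by
  have h := integrableOn_rpow_mul_exp_neg_mul_sq (pow_pos hc 2)
    (by linarith [k.cast_nonneg (α := ℝ)] : (-1 : ℝ) < k)
  simpa only [rpow_natCast, neg_mul, ← mul_pow] using h

theorem lintegral_Ioi_pow_mul_exp_neg_mul_sq (k : ℕ) {c : ℝ} (hc : 0 < c) :
    ∫⁻ r in Ioi (0 : ℝ), ENNReal.ofReal (r ^ k * exp (-(c * r) ^ 2)) =
      ENNReal.ofReal (Gamma ((k + 1) / 2) / (2 * c ^ (k + 1))) := by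
  rw [← integral_Ioi_pow_mul_exp_neg_mul_sq k hc, ofReal_integral_eq_lintegral_ofReal
    (integrableOn_Ioi_pow_mul_exp_neg_mul_sq k hc)]
  filter_upwards [ae_restrict_mem measurableSet_Ioi] with r hr
  exact mul_nonneg (pow_nonneg (le_of_lt hr) k) (exp_nonneg _)

theorem integral_abs_mul_exp_neg_sq : ∫ t : ℝ, |t| * exp (-t ^ 2) = 1 := by
  have h := integral_comp_abs (f := fun t => t * exp (-t ^ 2))
  have h1 := integral_Ioi_pow_mul_exp_neg_mul_sq 1 one_pos
  simp only [sq_abs, pow_one, one_mul] at h h1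
  rw [h, h1]
  norm_num

theorem integral_ite_abs_mul_exp_neg_sq (p : Prop) [Decidable p] :
    ∫ t : ℝ, (if p then |t| else 1) * exp (-t ^ 2) = if p then 1 else √π := by
  split_ifs
  · exact integral_abs_mul_exp_neg_sq
  · simpa using integral_gaussian 1

theorem integrable_ite_abs_mul_exp_neg_sq (p : Prop) [Decidable p] :
    Integrable fun t : ℝ => (if p then |t| else 1) * exp (-t ^ 2) := by
  split_ifs
  · simpa using (integrable_mul_exp_neg_mul_sq one_pos).abs
  · simpa using integrable_exp_neg_mul_sq one_pos

theorem abs_apply_mul_exp_neg_sum_sq_eq_prod {ι : Type*} [Fintype ι] [DecidableEq ι]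
    (i : ι) (u : ι → ℝ) :
    |u i| * exp (-∑ j, u j ^ 2) = ∏ j, (if j = i then |u j| else 1) * exp (-u j ^ 2) := by
  rw [Finset.prod_mul_distrib, Fintype.prod_ite_eq', ← exp_sum, Finset.sum_neg_distrib]

theorem lintegral_abs_apply_mul_exp_neg_sum_sq {ι : Type*} [Fintype ι] (i : ι) :
    ∫⁻ u : ι → ℝ, ENNReal.ofReal (|u i| * exp (-∑ j, u j ^ 2)) =
      ENNReal.ofReal (√π ^ (Fintype.card ι - 1)) := by
  classical
  simp_rw [abs_apply_mul_exp_neg_sum_sq_eq_prod i]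
  rw [← ofReal_integral_eq_lintegral_ofReal (μ := volume)
    (Integrable.fintype_prod_dep fun j => integrable_ite_abs_mul_exp_neg_sq (j = i))
    (ae_of_all _ fun u => Finset.prod_nonneg fun j _ => by positivity),
    integral_fintype_prod_volume_eq_prod (fun j t => (if j = i then |t| else 1) * exp (-t ^ 2))]
  simp_rw [integral_ite_abs_mul_exp_neg_sq]
  rw [Fintype.prod_eq_mul_prod_compl i, if_pos rfl, one_mul,
    Finset.prod_congr rfl fun j hj => if_neg (Finset.notMem_singleton.1 (Finset.mem_compl.1 hj)),
    Finset.prod_const, Finset.card_compl, Finset.card_singleton]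

theorem lintegral_abs_inner_mul_exp_neg_norm_sq {ι : Type*} [Fintype ι] (v : EuclideanSpace ℝ ι) :
    ∫⁻ z, ENNReal.ofReal (|⟪v, z⟫| * exp (-‖z‖ ^ 2)) =
      ENNReal.ofReal (‖v‖ * √π ^ (Fintype.card ι - 1)) := by
  classical
  rcases eq_or_ne v 0 with rfl | hv
  · simp
  obtain ⟨i⟩ : Nonempty ι := not_isEmpty_iff.1 fun _ => hv (Subsingleton.elim _ _)
  set w : EuclideanSpace ℝ ι := ‖v‖ • EuclideanSpace.single i 1
  set Q := Submodule.reflection (ℝ ∙ (v - w))ᗮ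
  have hQv : Q v = w := Submodule.reflection_sub (by simp [w, norm_smul])
  have hinner (z : EuclideanSpace ℝ ι) : ⟪v, Q z⟫ = ‖v‖ * z i := calc
    ⟪v, Q z⟫ = ⟪Q v, Q (Q z)⟫ := (Q.inner_map_map _ _).symm
    _ = ⟪w, z⟫ := by rw [hQv, Submodule.reflection_reflection]
    _ = ‖v‖ * z i := by simp [w, real_inner_smul_left, EuclideanSpace.inner_single_left]
  rw [← Q.measurePreserving.lintegral_comp (by fun_prop)]
  simp_rw [hinner, Q.norm_map, abs_mul, abs_norm, mul_assoc, ENNReal.ofReal_mul (norm_nonneg v)]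
  rw [lintegral_const_mul _ (by fun_prop),
    ← (PiLp.volume_preserving_toLp ι).lintegral_comp (by fun_prop)]
  simp_rw [EuclideanSpace.norm_sq_eq, Real.norm_eq_abs, sq_abs]
  rw [lintegral_abs_apply_mul_exp_neg_sum_sq, ← ENNReal.ofReal_mul (norm_nonneg v)]

section Gaussian

variable {E F : Type*} [NormedAddCommGroup E] [InnerProductSpace ℝ E] [FiniteDimensional ℝ E]
  [MeasurableSpace E] [BorelSpace E] [Nontrivial E] (μ : Measure E) [μ.IsAddHaarMeasure]
  [NormedAddCommGroup F] [NormedSpace ℝ F]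

theorem lintegral_abs_inner_mul_exp_neg_norm_sq_eq_lintegral_toSphere (B : E ≃ₗ[ℝ] F) (x : E) :
    ∫⁻ y, ENNReal.ofReal (|⟪x, y⟫| * exp (-‖B y‖ ^ 2)) ∂μ =
      ENNReal.ofReal (Gamma ((finrank ℝ E + 1) / 2) / 2) *
        ∫⁻ θ : sphere (0 : E) 1,
          ENNReal.ofReal (|⟪x, (θ : E)⟫| * ‖B θ‖⁻¹ ^ (finrank ℝ E + 1)) ∂μ.toSphere := by
  have hB : Continuous B := B.toLinearMap.continuous_of_finiteDimensional
  have hd : 0 < finrank ℝ E := finrank_pos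
  rw [lintegral_eq_lintegral_toSphere_lintegral_Ioi μ (by fun_prop),
    ← lintegral_const_mul' _ _ ENNReal.ofReal_ne_top]
  refine lintegral_congr fun θ => ?_
  have hc : 0 < ‖B θ‖ := norm_pos_iff.2 (B.map_ne_zero_iff.2 (ne_zero_of_mem_unit_sphere θ))
  calc ∫⁻ r in Ioi (0 : ℝ), ENNReal.ofReal (r ^ (finrank ℝ E - 1)) *
        ENNReal.ofReal (|⟪x, r • (θ : E)⟫| * exp (-‖B (r • (θ : E))‖ ^ 2))
      = ∫⁻ r in Ioi (0 : ℝ), ENNReal.ofReal |⟪x, (θ : E)⟫| *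
          ENNReal.ofReal (r ^ (finrank ℝ E - 1 + 1) * exp (-(‖B θ‖ * r) ^ 2)) := by
        refine setLIntegral_congr_fun measurableSet_Ioi fun r (hr : 0 < r) => ?_
        rw [← ENNReal.ofReal_mul (by positivity), ← ENNReal.ofReal_mul (abs_nonneg _),
          real_inner_smul_right, map_smul, norm_smul, abs_mul, Real.norm_of_nonneg hr.le,
          abs_of_pos hr]
        ring_nf
    _ = ENNReal.ofReal (Gamma ((finrank ℝ E + 1) / 2) / 2) *
          ENNReal.ofReal (|⟪x, (θ : E)⟫| * ‖B θ‖⁻¹ ^ (finrank ℝ E + 1)) := by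
        rw [lintegral_const_mul' _ _ ENNReal.ofReal_ne_top,
          lintegral_Ioi_pow_mul_exp_neg_mul_sq _ hc, Nat.sub_add_cancel hd,
          ← ENNReal.ofReal_mul (abs_nonneg _), ← ENNReal.ofReal_mul (by positivity)]
        congr 1
        rw [inv_pow]
        field_simp

end Gaussian

theorem lintegral_abs_inner_mul_exp_neg_norm_symm_sq {ι : Type*} [Fintype ι]
    (A : EuclideanSpace ℝ ι ≃ₗ[ℝ] EuclideanSpace ℝ ι) (x : EuclideanSpace ℝ ι) :
    ∫⁻ y, ENNReal.ofReal (|⟪x, y⟫| * exp (-‖A.symm y‖ ^ 2)) =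
      ENNReal.ofReal (|LinearMap.det A.toLinearMap| *
        (‖LinearMap.adjoint A.toLinearMap x‖ * √π ^ (Fintype.card ι - 1))) := by
  set g := fun y => ENNReal.ofReal (|⟪x, y⟫| * exp (-‖A.symm y‖ ^ 2))
  have hdet : |LinearMap.det A.toLinearMap| ≠ 0 :=
    abs_ne_zero.2 (LinearEquiv.isUnit_det' A).ne_zero
  have hA : Continuous A := A.toLinearMap.continuous_of_finiteDimensional
  have hA' : Continuous A.symm := A.symm.toLinearMap.continuous_of_finiteDimensional
  have hg (z : EuclideanSpace ℝ ι) :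
      g (A z) = ENNReal.ofReal (|⟪LinearMap.adjoint A.toLinearMap x, z⟫| * exp (-‖z‖ ^ 2)) := by
    simp [g, LinearMap.adjoint_inner_left]
  have hchange : ∫⁻ z, g (A z) = ENNReal.ofReal |LinearMap.det A.toLinearMap|⁻¹ * ∫⁻ y, g y := by
    rw [← lintegral_map (by fun_prop) hA.measurable, ← LinearEquiv.coe_coe,
      Measure.map_linearMap_addHaar_eq_smul_addHaar volume (abs_ne_zero.1 hdet),
      lintegral_smul_measure, abs_inv, smul_eq_mul]
  simp_rw [hg, lintegral_abs_inner_mul_exp_neg_norm_sq] at hchange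
  rw [ENNReal.ofReal_mul (abs_nonneg _), hchange, ← mul_assoc, ← ENNReal.ofReal_mul (abs_nonneg _),
    mul_inv_cancel₀ hdet, ENNReal.ofReal_one, one_mul]

theorem ofReal_mul_lintegral_abs_inner_mul_norm_symm_inv_pow [NeZero n]
    (A : EuclideanSpace ℝ (Fin n) ≃ₗ[ℝ] EuclideanSpace ℝ (Fin n)) (x : EuclideanSpace ℝ (Fin n)) :
    ENNReal.ofReal (Gamma ((n + 1) / 2) / 2) *
      ∫⁻ θ : sphere (0 : EuclideanSpace ℝ (Fin n)) 1,
        ENNReal.ofReal (|⟪x, (θ : EuclideanSpace ℝ (Fin n))⟫| * ‖A.symm θ‖⁻¹ ^ (n + 1))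
          ∂sphereMeasure n =
      ENNReal.ofReal (|LinearMap.det A.toLinearMap| *
        (‖LinearMap.adjoint A.toLinearMap x‖ * √π ^ (n - 1))) := by
  have hpolar := lintegral_abs_inner_mul_exp_neg_norm_sq_eq_lintegral_toSphere volume A.symm x
  have hlinear := lintegral_abs_inner_mul_exp_neg_norm_symm_sq A x
  rw [finrank_euclideanSpace_fin] at hpolar
  rwa [Fintype.card_fin, hpolar] at hlinear

theorem integral_abs_inner_mul_radial_image_closedBall_pow
    (A : EuclideanSpace ℝ (Fin n) ≃ₗ[ℝ] EuclideanSpace ℝ (Fin n)) (x : EuclideanSpace ℝ (Fin n))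
    (k : ℕ) :
    ∫ θ : sphere (0 : EuclideanSpace ℝ (Fin n)) 1, |⟪x, (θ : EuclideanSpace ℝ (Fin n))⟫| *
        radial (A '' closedBall 0 1) θ ^ k ∂sphereMeasure n =
      (∫⁻ θ : sphere (0 : EuclideanSpace ℝ (Fin n)) 1,
        ENNReal.ofReal (|⟪x, (θ : EuclideanSpace ℝ (Fin n))⟫| * ‖A.symm θ‖⁻¹ ^ k)
          ∂sphereMeasure n).toReal := by
  have hA' : Continuous A.symm := A.symm.toLinearMap.continuous_of_finiteDimensional
  simp_rw [fun θ : sphere (0 : EuclideanSpace ℝ (Fin n)) 1 =>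
    radial_image_closedBall A (ne_zero_of_mem_unit_sphere θ)]
  exact integral_eq_lintegral_of_nonneg_ae (ae_of_all _ fun θ => by positivity)
    (by fun_prop : Measurable _).aestronglyMeasurable

/-- The generating measure of a centered ellipsoid as a zonoid: for all `x`,
`∫_{S^{n-1}} |⟨x,θ⟩| ρ_E(θ)^{n+1} dθ = 2 (κ_{n-1}/κₙ) vol(E) h_E(x)`. -/
theorem ellipsoid_zonoid_generating_measure
    (n : ℕ) (hn : 0 < n)
    (A : EuclideanSpace ℝ (Fin n) ≃ₗ[ℝ] EuclideanSpace ℝ (Fin n))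
    (E : Set (EuclideanSpace ℝ (Fin n)))
    (hE : E = A '' Metric.closedBall (0 : EuclideanSpace ℝ (Fin n)) 1)
    (x : EuclideanSpace ℝ (Fin n)) :
    (∫ θ : Metric.sphere (0 : EuclideanSpace ℝ (Fin n)) 1,
        |⟪x, (θ : EuclideanSpace ℝ (Fin n))⟫| *
          radial E (θ : EuclideanSpace ℝ (Fin n)) ^ (n + 1) ∂(sphereMeasure n)) =
      2 * (kappa (n - 1) / kappa n) * (volume E).toReal * suppFn E x := by
  subst hE
  have : NeZero n := ⟨hn.ne'⟩
  have hΓ := Gamma_pos_of_pos (by positivity : (0 : ℝ) < (n + 1) / 2)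
  have hκ := kappa_pos n
  have hJ := congrArg ENNReal.toReal (ofReal_mul_lintegral_abs_inner_mul_norm_symm_inv_pow A x)
  rw [ENNReal.toReal_mul, ENNReal.toReal_ofReal (by positivity),
    ENNReal.toReal_ofReal (by positivity)] at hJ
  rw [integral_abs_inner_mul_radial_image_closedBall_pow, suppFn_image_closedBall,
    volume_image_closedBall, ENNReal.toReal_ofReal (by positivity), kappa_sub_one hn]
  -- keeps `field_simp` from rewriting inside the integral
  generalize (∫⁻ θ : sphere (0 : EuclideanSpace ℝ (Fin n)) 1, _ ∂sphereMeasure n).toReal = J at hJ ⊢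
  field_simp
  linarith
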